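/- Define the abstraction α(p) of a multivariate polynomial p over X₁,…,Xₙ with natural coefficients as the vector in Values^{n+1} given by the recursive rules of iSAPP (constant c>1 ↦ A in the last coordinate; constant 0 or 1 ↦ 0-vector or L in last coordinate; Xᵢ ↦ L in coordinate i; αXᵢ with α>1 ↦ A in coordinate i; sums abstracted by sum of abstractions; products by M·α(q) ∪ M·α(r)). Then for two polynomials p, q, the abstraction of their coefficient-wise-max union equals the entrywise union of abstractions: α(p ⊔ q) = α(p) ∪ α(q). -/

import Mathlib

/-- The iSAPP algebra of abstract values: `0 < L < A < M`. -/
inductive Val : Type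
  | z | L | A | M
  deriving DecidableEq, Repr

instance : Fintype Val := ⟨{Val.z, Val.L, Val.A, Val.M}, fun x => by cases x <;> simp⟩

namespace Val

def toNat : Val → ℕ
  | z => 0 | L => 1 | A => 2 | M => 3

instance : LinearOrder Val := LinearOrder.lift' toNat (by decide)

/-- The iSAPP addition table: `0` neutral, `L+L = A`, `L+A = A+A = A`, `M` absorbing. -/
def add : Val → Val → Val
  | z, x => x
  | x, z => x
  | M, _ => M
  | _, M => M
  | L, L => A
  | L, A => A
  | A, L => A
  | A, A => A

/-- The iSAPP multiplication table: `0` absorbing, `L` neutral,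
`A×A = A`, `A×M = M×A = M×M = M`. -/
def mul : Val → Val → Val
  | z, _ => z
  | _, z => z
  | L, x => x
  | x, L => x
  | A, A => A
  | A, M => M
  | M, A => M
  | M, M => M

end Val

instance : Zero Val := ⟨Val.z⟩
instance : Add Val := ⟨Val.add⟩
instance : One Val := ⟨Val.L⟩
instance : Mul Val := ⟨Val.mul⟩

instance : CommSemiring Val where
  add := Val.add
  add_assoc := by decide
  zero := Val.z
  zero_add := by decide
  add_zero := by decide
  nsmul := nsmulRec
  add_comm := by decide
  mul := Val.mul
  left_distrib := by decide
  right_distrib := by decide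
  zero_mul := by decide
  mul_zero := by decide
  mul_assoc := by decide
  one := Val.L
  one_mul := by decide
  mul_one := by decide
  mul_comm := by decide

/-- Monomial-wise (coefficient-wise) maximum of two polynomials with ℕ coefficients. -/
noncomputable def pUnion {nv : ℕ} (p q : MvPolynomial (Fin nv) ℕ) :
    MvPolynomial (Fin nv) ℕ :=
  letI := Classical.decEq (Fin nv →₀ ℕ)
  ∑ m ∈ p.support ∪ q.support, MvPolynomial.monomial m (max (p.coeff m) (q.coeff m))

/-- Coefficient-wise order on polynomials. -/
def pLe {nv : ℕ} (p q : MvPolynomial (Fin nv) ℕ) : Prop :=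
  ∀ m, p.coeff m ≤ q.coeff m

open Classical in
/-- Abstraction of a single monomial `c·X^m` (as it appears in the canonical form):
a constant `c` contributes `L` (if `c = 1`) or `A` (if `c > 1`) to the last coordinate;
a degree-one monomial `c·Xᵢ` contributes `L` (if `c = 1`) or `A` (if `c > 1`) at
coordinate `i`; any other monomial contributes `M` at every involved coordinate
(the product rule `α(q·r) = M·α(q) ∪ M·α(r)`). -/
noncomputable def monoAbs {nv : ℕ} (m : Fin nv →₀ ℕ) (c : ℕ) : Fin (nv + 1) → Val :=
  fun i =>
    if h : (i : ℕ) < nv then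
      if m ⟨i, h⟩ = 0 then Val.z
      else if (m.sum fun _ e => e) = 1 then (if c = 1 then Val.L else Val.A)
      else Val.M
    else
      if m = 0 then (if c = 0 then Val.z else if c = 1 then Val.L else Val.A)
      else if (m.sum fun _ e => e) = 1 then Val.z
      else if 2 ≤ c then Val.M else Val.z

/-- Abstraction of a polynomial, as a vector in `Values^{n+1}`:
the sum (in the `Val` semiring) of the abstractions of its monomials. -/
noncomputable def polAbs {nv : ℕ} (p : MvPolynomial (Fin nv) ℕ) : Fin (nv + 1) → Val :=
  fun i => ∑ m ∈ p.support, monoAbs m (p.coeff m) i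

/-!
At a fixed coordinate `i`, every monomial except one (`Xᵢ` for a variable coordinate, the
constant monomial for the last one) abstracts to `0` or `M`, and on such values the iSAPP
addition is the maximum. Hence `α(p)ᵢ` is the maximum of the abstractions of the monomials of
`p`, and this maximum commutes with the coefficient-wise maximum because the abstraction of a
monomial is monotone in its coefficient.
-/

namespace Val

@[simp] theorem z_eq_zero : z = 0 := rfl

instance : OrderBot Val where
  bot := 0
  bot_le := by decide

theorem add_eq_max_of_eq_zero_or_eq_M : ∀ x y : Val, (x = 0 ∨ x = M) → x + y = max x y := by
  decide

theorem sum_eq_sup_of_eq_zero_or_eq_M {ι : Type*} [DecidableEq ι] (s : Finset ι) (u : ι → Val)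
    (i₀ : ι) (hu : ∀ i ∈ s, i ≠ i₀ → u i = 0 ∨ u i = M) : ∑ i ∈ s, u i = s.sup u := by
  induction s using Finset.induction_on with
  | empty => rfl
  | @insert a s ha ih =>
    rw [Finset.sum_insert ha, Finset.sup_insert,
      ih fun i hi => hu i (Finset.mem_insert_of_mem hi)]
    by_cases hai₀ : a = i₀
    · subst hai₀
      have hsup : s.sup u = 0 ∨ s.sup u = M :=
        Finset.sup_induction (p := fun x => x = 0 ∨ x = M) (Or.inl rfl)
          (fun x hx y hy => (max_choice x y).elim (fun h => h.symm ▸ hx) (fun h => h.symm ▸ hy))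
          fun i hi => hu i (Finset.mem_insert_of_mem hi) (by rintro rfl; exact ha hi)
      rw [add_comm, add_eq_max_of_eq_zero_or_eq_M _ _ hsup, max_comm]
    · exact add_eq_max_of_eq_zero_or_eq_M _ _ (hu a (Finset.mem_insert_self a s) hai₀)

end Val

/-- Unlike `monoAbs`, this vanishes at `c = 0`, so `polAbs` may sum it over any superset of
the support. -/
noncomputable def coeffAbs {nv : ℕ} (m : Fin nv →₀ ℕ) (c : ℕ) (i : Fin (nv + 1)) : Val :=
  if c = 0 then 0 else monoAbs m c i

theorem monoAbs_mono {nv : ℕ} (m : Fin nv →₀ ℕ) (i : Fin (nv + 1)) {a b : ℕ}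
    (ha : a ≠ 0) (hab : a ≤ b) : monoAbs m a i ≤ monoAbs m b i := by
  unfold monoAbs
  split_ifs <;> first | rfl | decide | omega

theorem coeffAbs_monotone {nv : ℕ} (m : Fin nv →₀ ℕ) (i : Fin (nv + 1)) :
    Monotone fun c => coeffAbs m c i := by
  intro a b hab
  simp only [coeffAbs]
  by_cases ha : a = 0
  · rw [if_pos ha]
    exact bot_le
  · rw [if_neg ha, if_neg (by omega)]
    exact monoAbs_mono m i ha hab

noncomputable def exceptionalMonomial {nv : ℕ} (i : Fin (nv + 1)) : Fin nv →₀ ℕ :=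
  if h : (i : ℕ) < nv then Finsupp.single ⟨i, h⟩ 1 else 0

theorem coeffAbs_eq_zero_or_eq_M {nv : ℕ} {m : Fin nv →₀ ℕ} (c : ℕ) {i : Fin (nv + 1)}
    (hm : m ≠ exceptionalMonomial i) : coeffAbs m c i = 0 ∨ coeffAbs m c i = Val.M := by
  unfold coeffAbs monoAbs
  unfold exceptionalMonomial at hm
  by_cases hi : (i : ℕ) < nv
  · rw [dif_pos hi] at hm
    have hdeg : m ⟨i, hi⟩ ≠ 0 → (m.sum fun _ e => e) ≠ 1 := by
      intro hmi hdeg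
      obtain ⟨j, rfl⟩ := (Finsupp.sum_eq_one_iff m).mp hdeg
      obtain rfl : j = ⟨i, hi⟩ := by
        by_contra hj
        exact hmi (Finsupp.single_eq_of_ne (Ne.symm hj))
      exact hm rfl
    split_ifs <;> simp_all
  · rw [dif_neg hi] at hm
    split_ifs <;> simp_all

theorem polAbs_eq_sup {nv : ℕ} (p : MvPolynomial (Fin nv) ℕ) {s : Finset (Fin nv →₀ ℕ)}
    (hs : p.support ⊆ s) (i : Fin (nv + 1)) :
    polAbs p i = s.sup fun m => coeffAbs m (p.coeff m) i := by
  classical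
  have hsum : polAbs p i = ∑ m ∈ s, coeffAbs m (p.coeff m) i := by
    refine (Finset.sum_congr rfl fun m hm => ?_).trans
      (Finset.sum_subset hs fun m _ hm => ?_)
    · rw [coeffAbs, if_neg (MvPolynomial.mem_support_iff.mp hm)]
    · rw [coeffAbs, if_pos (MvPolynomial.notMem_support_iff.mp hm)]
  rw [hsum, Val.sum_eq_sup_of_eq_zero_or_eq_M _ _ (exceptionalMonomial i)]
  exact fun m _ hm => coeffAbs_eq_zero_or_eq_M _ hm

theorem coeff_pUnion {nv : ℕ} (p q : MvPolynomial (Fin nv) ℕ) (m : Fin nv →₀ ℕ) :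
    (pUnion p q).coeff m = max (p.coeff m) (q.coeff m) := by
  classical
  rw [pUnion, MvPolynomial.coeff_sum]
  simp only [MvPolynomial.coeff_monomial, Finset.sum_ite_eq', Finset.mem_union,
    MvPolynomial.mem_support_iff]
  split_ifs
  · rfl
  · simp_all

theorem support_pUnion {nv : ℕ} (p q : MvPolynomial (Fin nv) ℕ) :
    (pUnion p q).support = p.support ∪ q.support := by
  ext m
  simp only [MvPolynomial.mem_support_iff, coeff_pUnion, Finset.mem_union]
  omega

/-- Lemma `polysum` of iSAPP: the abstraction of a coefficient-wise-max union of two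
polynomials is the entrywise union (max) of their abstractions. -/
theorem isapp_polAbs_pUnion {nv : ℕ} (p q : MvPolynomial (Fin nv) ℕ) :
    polAbs (pUnion p q) = fun i => max (polAbs p i) (polAbs q i) := by
  funext i
  rw [polAbs_eq_sup _ (support_pUnion p q).subset, polAbs_eq_sup p Finset.subset_union_left,
    polAbs_eq_sup q Finset.subset_union_right, ← Finset.sup_sup]
  refine Finset.sup_congr rfl fun m _ => ?_
  rw [coeff_pUnion]
  exact (coeffAbs_monotone m i).map_max
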